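/- Let γ ∈ Φ and write γ = Σ_{α∈Δ} n_α α with n_α ∈ ℤ. Then γ is a long root if and only if r divides n_α for every short simple root α ∈ Δ_sh. -/

import Mathlib

open scoped RealInnerProductSpace Classical

noncomputable section

variable {V : Type} [NormedAddCommGroup V] [InnerProductSpace ℝ V] [FiniteDimensional ℝ V]

/-- The orthogonal reflection of `V` in the hyperplane orthogonal to `α`
(the reflection `s_α` when `α` is a root). -/
def sref (α : V) : V ≃ₗᵢ[ℝ] V := Submodule.reflection (Submodule.span ℝ {α})ᗮ

/-- The pairing `⟨β, γ∨⟩ = 2(β|γ)/(γ|γ)` of a vector with the coroot of `γ`. -/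
def cpair (β γ : V) : ℝ := 2 * ⟪β, γ⟫ / ⟪γ, γ⟫

/-- An irreducible reduced (crystallographic) root system in the real inner product
space `V`, the inner product being invariant under the Weyl group (automatic, since
reflections are isometries), normalized so that the shortest roots have squared length `1`. -/
structure NRootSystem (V : Type) [NormedAddCommGroup V] [InnerProductSpace ℝ V]
    [FiniteDimensional ℝ V] where
  Φ : Finset V
  nonempty : Φ.Nonempty
  zero_not_mem : (0 : V) ∉ Φ
  span_eq_top : Submodule.span ℝ (Φ : Set V) = ⊤
  reduced : ∀ α ∈ Φ, ∀ t : ℝ, t • α ∈ Φ → t = 1 ∨ t = -1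
  pairing_int : ∀ α ∈ Φ, ∀ β ∈ Φ, ∃ n : ℤ, 2 * ⟪β, α⟫ = n * ⟪α, α⟫
  reflect_mem : ∀ α ∈ Φ, ∀ β ∈ Φ, sref α β ∈ Φ
  irreducible : ∀ S : Finset V, S ⊆ Φ → S.Nonempty → (Φ \ S).Nonempty →
    ∃ α ∈ S, ∃ β ∈ Φ \ S, ⟪α, β⟫ ≠ 0
  norm_one_le : ∀ α ∈ Φ, 1 ≤ ⟪α, α⟫
  exists_norm_one : ∃ α ∈ Φ, ⟪α, α⟫ = 1

namespace NRootSystem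

variable (R : NRootSystem V)

/-- `r`, the maximal squared length of a root. -/
def r : ℝ := R.Φ.sup' R.nonempty fun α => ⟪α, α⟫

/-- long roots -/
def IsLong (α : V) : Prop := α ∈ R.Φ ∧ ⟪α, α⟫ = R.r

/-- short roots -/
def IsShort (α : V) : Prop := α ∈ R.Φ ∧ ⟪α, α⟫ < R.r

/-- The Weyl group `W`, generated by the reflections in the roots. -/
def Weyl : Subgroup (V ≃ₗᵢ[ℝ] V) := Subgroup.closure (sref '' (R.Φ : Set V))

end NRootSystem

/-- The standard parabolic subgroup `W_I` generated by the reflections in `I ⊆ Δ`. -/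
def WeylP (I : Finset V) : Subgroup (V ≃ₗᵢ[ℝ] V) := Subgroup.closure (sref '' (I : Set V))

/-- A base (set of simple roots) `Δ` of the root system, together with the
integral coordinates `coeff γ α` of each root `γ` in the basis `Δ`; every root is a
nonnegative or a nonpositive integral combination of the simple roots. -/
structure Base {V : Type} [NormedAddCommGroup V] [InnerProductSpace ℝ V]
    [FiniteDimensional ℝ V] (R : NRootSystem V) where
  Δ : Finset V
  subset : Δ ⊆ R.Φ
  indep : LinearIndependent ℝ (fun a : {x : V // x ∈ Δ} => (a : V))
  coeff : V → V → ℤ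
  coeff_spec : ∀ γ ∈ R.Φ, γ = ∑ α ∈ Δ, (coeff γ α : ℝ) • α
  coeff_sign : ∀ γ ∈ R.Φ, (∀ α ∈ Δ, 0 ≤ coeff γ α) ∨ (∀ α ∈ Δ, coeff γ α ≤ 0)

namespace Base

variable {R : NRootSystem V} (B : Base R)

/-- positive roots -/
def IsPos (γ : V) : Prop := γ ∈ R.Φ ∧ ∀ α ∈ B.Δ, 0 ≤ B.coeff γ α

/-- negative roots -/
def IsNeg (γ : V) : Prop := γ ∈ R.Φ ∧ ∀ α ∈ B.Δ, B.coeff γ α ≤ 0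

/-- the height of a root -/
def ht (γ : V) : ℤ := ∑ α ∈ B.Δ, B.coeff γ α

/-- the dual height `ht∨ γ = ht (γ∨)`: the height of the coroot `γ∨ = 2γ/(γ|γ)`
with respect to the basis of simple coroots `α∨ = 2α/(α|α)`, `α ∈ Δ`. -/
def htv (γ : V) : ℝ := ∑ α ∈ B.Δ, (B.coeff γ α : ℝ) * ⟪α, α⟫ / ⟪γ, γ⟫

/-- The length of `w`: the minimal length of an expression of `w` as a product of
simple reflections. -/
def len (w : V ≃ₗᵢ[ℝ] V) : ℕ :=
  sInf {n | ∃ g : Fin n → V, (∀ i, g i ∈ B.Δ) ∧ w = (List.ofFn fun i => sref (g i)).prod}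

/-- `w` is the longest element of the subgroup `H`. -/
def IsLongest (H : Subgroup (V ≃ₗᵢ[ℝ] V)) (w : V ≃ₗᵢ[ℝ] V) : Prop :=
  w ∈ H ∧ ∀ u ∈ H, B.len u ≤ B.len w

/-- `X_I = {w ∈ W | w(Φ_I⁺) ⊆ Φ⁺}`, the set of minimal length coset
representatives of `W/W_I`. -/
def XI (I : Finset V) : Set (V ≃ₗᵢ[ℝ] V) :=
  {w | w ∈ R.Weyl ∧
    ∀ γ, γ ∈ R.Φ → γ ∈ Submodule.span ℝ (I : Set V) → B.IsPos γ → B.IsPos (w γ)}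

/-- `h` is the highest root. -/
def IsHighest (h : V) : Prop :=
  h ∈ R.Φ ∧ ∀ γ ∈ R.Φ, ∀ α ∈ B.Δ, B.coeff γ α ≤ B.coeff h α

/-- `Ĩ = {α ∈ Δ | (h|α) = 0}`, the simple roots orthogonal to the highest root `h`. -/
def Itil (h : V) : Finset V := B.Δ.filter fun α => ⟪h, α⟫ = 0

/-- The level `L(α)` of a long root `α`, where `h` is the highest root:
`L(α) = ht∨(h) − ht∨(α)` if `α > 0` and `L(α) = ht∨(h) − ht∨(α) − 1` if `α < 0`. -/
def level (h α : V) : ℝ :=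
  if B.IsPos α then B.htv h - B.htv α else B.htv h - B.htv α - 1

/-- The elementary step relation `β →_γ α` on long roots (`γ` a positive root):
`α = s_γ(β)` and `L(α) = L(β) + 1`. -/
def Step (h γ β α : V) : Prop :=
  R.IsLong β ∧ R.IsLong α ∧ B.IsPos γ ∧ α = sref γ β ∧
    B.level h α = B.level h β + 1

/-- `g` is the sequence of positive roots of a path
`β = β₀ →_{g 0} β₁ →_{g 1} ⋯ →_{g (n-1)} β_n = α` from `β` to `α`. -/
def IsPathWord (h : V) {n : ℕ} (g : Fin n → V) (β α : V) : Prop :=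
  ∃ c : Fin (n + 1) → V, c 0 = β ∧ c (Fin.last n) = α ∧
    ∀ i : Fin n, B.Step h (g i) (c i.castSucc) (c i.succ)

/-- a path all of whose steps use simple roots -/
def IsSimplePathWord (h : V) {n : ℕ} (g : Fin n → V) (β α : V) : Prop :=
  B.IsPathWord h g β α ∧ ∀ i, g i ∈ B.Δ

/-- there is a path from `β` to `α`, i.e. `α ⪯ β` -/
def HasPath (h β α : V) : Prop := ∃ (n : ℕ) (g : Fin n → V), B.IsPathWord h g β α

/-- there is a simple path from `β` to `α` -/
def HasSimplePath (h β α : V) : Prop :=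
  ∃ (n : ℕ) (g : Fin n → V), B.IsSimplePathWord h g β α

/-- The covering relation `w →_γ w'` for the Bruhat order:
`w' = s_γ w` and `l(w') = l(w) + 1`, for a positive root `γ`. -/
def BStep (γ : V) (w w' : V ≃ₗᵢ[ℝ] V) : Prop :=
  B.IsPos γ ∧ w' = sref γ * w ∧ B.len w' = B.len w + 1

/-- The Bruhat order on `W`: the reflexive–transitive closure of the covering
relations. -/
def bruhatLE : (V ≃ₗᵢ[ℝ] V) → (V ≃ₗᵢ[ℝ] V) → Prop :=
  Relation.ReflTransGen fun w w' => ∃ γ, B.BStep γ w w'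

/-- `x` is an element of `W` with `x(β) = α` of the minimal possible length
`|L(α) − L(β)|` (this is the element `x_{αβ}` when it exists). -/
def MinTake (h β α : V) (x : V ≃ₗᵢ[ℝ] V) : Prop :=
  x ∈ R.Weyl ∧ x β = α ∧ (B.len x : ℝ) = |B.level h α - B.level h β|

/-- `g` is a reduced expression of `x` as a product of simple reflections. -/
def IsReducedWord {n : ℕ} (g : Fin n → V) (x : V ≃ₗᵢ[ℝ] V) : Prop :=
  (∀ i, g i ∈ B.Δ) ∧ x = (List.ofFn fun i => sref (g i)).prod ∧ n = B.len x

/-- The depth of a positive root `β`: the minimal integer `k` such that there is an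
element `w` of `W` of length `k` with `w(β) < 0`. -/
def depth (β : V) : ℕ := sInf {n | ∃ w ∈ R.Weyl, B.len w = n ∧ B.IsNeg (w β)}

end Base

/-!
Every root has squared length `1`, `2` or `3`: by irreducibility it is non-orthogonal to a root
of squared length `1`, and the crystallographic restriction bounds the ratio of their lengths.

For `⇒`, reflecting a positive root `γ ∉ Δ` in a simple root `β` with `(γ|β) > 0` gives a positive
root of smaller height, and induction on the height shows that the coroot `γ∨` has integral
coordinates `n_α (α|α)/(γ|γ)` in the simple coroots. For `γ` long and `α` short, `(α|α)` and `r`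
are coprime, so `r ∣ n_α`.

For `⇐`, `(·|·)` takes values in `rℤ` on the lattice spanned by the vectors `t • a` (`a` a root,
`t ∈ ℤ`, `r ∣ t (a|a)`), because `2 (t a | s b) = s ⟨b, a∨⟩ · t (a|a)`. If `r ∣ n_α` for all short
simple `α`, then `γ = Σ n_α α` lies in this lattice, so `(γ|γ)` is a positive multiple of `r`
that is at most `r`.
-/

section InnerLattice

variable {E : Type*} [NormedAddCommGroup E] [InnerProductSpace ℝ E] {M : AddSubgroup ℝ} {S : Set E}

theorem two_inner_mem_of_mem_closure (hS : ∀ v ∈ S, ∀ w ∈ S, 2 * ⟪v, w⟫ ∈ M) {x y : E}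
    (hx : x ∈ AddSubgroup.closure S) (hy : y ∈ AddSubgroup.closure S) : 2 * ⟪x, y⟫ ∈ M := by
  induction hx, hy using AddSubgroup.closure_induction₂ with
  | mem v w hv hw => exact hS v hv w hw
  | zero_left | zero_right => simp
  | add_left x y z _ _ _ hxz hyz => rw [inner_add_left, mul_add]; exact M.add_mem hxz hyz
  | add_right y z x _ _ _ hxy hxz => rw [inner_add_right, mul_add]; exact M.add_mem hxy hxz
  | neg_left x y _ _ h => rw [inner_neg_left, mul_neg]; exact M.neg_mem h
  | neg_right x y _ _ h => rw [inner_neg_right, mul_neg]; exact M.neg_mem h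

theorem inner_self_mem_of_mem_closure (hS₁ : ∀ v ∈ S, ⟪v, v⟫ ∈ M)
    (hS₂ : ∀ v ∈ S, ∀ w ∈ S, 2 * ⟪v, w⟫ ∈ M) {x : E} (hx : x ∈ AddSubgroup.closure S) :
    ⟪x, x⟫ ∈ M := by
  induction hx using AddSubgroup.closure_induction with
  | mem v hv => exact hS₁ v hv
  | zero => simp
  | add x y hx hy hxx hyy =>
    rw [real_inner_add_add_self]
    exact M.add_mem (M.add_mem hxx (two_inner_mem_of_mem_closure hS₂ hx hy)) hyy
  | neg x _ h => rwa [inner_neg_neg]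

end InnerLattice

section Reflection

variable {E : Type} [NormedAddCommGroup E] [InnerProductSpace ℝ E]

theorem sref_apply (α x : E) : sref α x = x - (2 * ⟪x, α⟫ / ⟪α, α⟫) • α := by
  rw [sref, Submodule.reflection_apply, Submodule.starProjection_orthogonal_val,
    Submodule.starProjection_singleton, real_inner_comm x α]
  rcases eq_or_ne α 0 with rfl | hα
  · simp [two_smul]
  have : ⟪α, α⟫ ≠ 0 := by simpa using hα
  match_scalars
  all_goals (field_simp; try norm_num)

theorem sref_self {α : E} (hα : α ≠ 0) : sref α α = -α := by
  have : ⟪α, α⟫ ≠ 0 := by simpa using hα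
  rw [sref_apply, mul_div_assoc, div_self this]
  module

end Reflection

namespace NRootSystem

variable (R : NRootSystem V) {α β : V}

theorem ne_zero (hα : α ∈ R.Φ) : α ≠ 0 := fun h => R.zero_not_mem (h ▸ hα)

theorem inner_self_pos (hα : α ∈ R.Φ) : 0 < ⟪α, α⟫ :=
  one_pos.trans_le (R.norm_one_le α hα)

theorem neg_mem (hα : α ∈ R.Φ) : -α ∈ R.Φ := by
  simpa [sref_self (R.ne_zero hα)] using R.reflect_mem α hα α hα

theorem sref_eq_sub_zsmul (hα : α ∈ R.Φ) {n : ℤ} (hn : 2 * ⟪β, α⟫ = n * ⟪α, α⟫) :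
    sref α β = β - (n : ℝ) • α := by
  rw [sref_apply, hn, mul_div_assoc, div_self (R.inner_self_pos hα).ne', mul_one]

theorem inner_self_le_r (hα : α ∈ R.Φ) : ⟪α, α⟫ ≤ R.r :=
  Finset.le_sup' (fun x : V => ⟪x, x⟫) hα

theorem exists_inner_self_eq_r : ∃ α ∈ R.Φ, ⟪α, α⟫ = R.r := by
  obtain ⟨α, hα, h⟩ := Finset.exists_mem_eq_sup' R.nonempty fun α : V => ⟪α, α⟫
  exact ⟨α, hα, h.symm⟩

theorem inner_mul_inner_lt (hα : α ∈ R.Φ) (hβ : β ∈ R.Φ) (hβα : β ≠ α) (hβα' : β ≠ -α) :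
    ⟪α, β⟫ * ⟪α, β⟫ < ⟪α, α⟫ * ⟪β, β⟫ := by
  refine (real_inner_mul_inner_self_le α β).lt_of_ne fun h => ?_
  have habs : ‖⟪α, β⟫‖ = ‖α‖ * ‖β‖ := by
    rw [Real.norm_eq_abs, ← sq_eq_sq₀ (abs_nonneg _) (by positivity), sq_abs, mul_pow,
      ← real_inner_self_eq_norm_sq, ← real_inner_self_eq_norm_sq, sq, h]
  obtain ⟨t, -, rfl⟩ := (norm_inner_eq_norm_iff (R.ne_zero hα) (R.ne_zero hβ)).1 habs
  rcases R.reduced α hα t hβ with rfl | rfl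
  · exact hβα (one_smul ℝ α)
  · exact hβα' (neg_one_smul ℝ α)

/-- The crystallographic restriction: the Cartan integers `⟨β, α∨⟩` and `⟨α, β∨⟩` of two
non-orthogonal roots have product `1`, `2` or `3`, and the shorter root has `⟨α, β∨⟩ = ±1`. -/
theorem inner_self_eq_of_inner_ne_zero (hα : α ∈ R.Φ) (hβ : β ∈ R.Φ) (hαβ : ⟪α, β⟫ ≠ 0)
    (hle : ⟪α, α⟫ ≤ ⟪β, β⟫) :
    ⟪β, β⟫ = ⟪α, α⟫ ∨ ⟪β, β⟫ = 2 * ⟪α, α⟫ ∨ ⟪β, β⟫ = 3 * ⟪α, α⟫ := by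
  by_cases hβα : β = α ∨ β = -α
  · rcases hβα with rfl | rfl <;> simp
  rw [not_or] at hβα
  obtain ⟨n, hn⟩ := R.pairing_int α hα β hβ
  obtain ⟨m, hm⟩ := R.pairing_int β hβ α hα
  rw [real_inner_comm] at hn
  have hαα := R.inner_self_pos hα
  have hββ := R.inner_self_pos hβ
  have hprod : 4 * (⟪α, β⟫ * ⟪α, β⟫) = (n * m : ℤ) * (⟪α, α⟫ * ⟪β, β⟫) := by
    push_cast
    linear_combination (2 * ⟪α, β⟫) * hn + (n * ⟪α, α⟫) * hm
  have hpos : 0 < n * m := by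
    have : (0 : ℝ) < (n * m : ℤ) := by
      nlinarith [mul_self_pos.2 hαβ, mul_pos hαα hββ]
    exact_mod_cast this
  have hlt : n * m < 4 := by
    have : ((n * m : ℤ) : ℝ) < 4 := by
      nlinarith [R.inner_mul_inner_lt hα hβ hβα.1 hβα.2, mul_pos hαα hββ]
    exact_mod_cast this
  have hnm : (n : ℝ) * ⟪α, α⟫ = m * ⟪β, β⟫ := by rw [← hn, ← hm]
  have hmm : m * m ≤ n * m := by
    have : ((m * m : ℤ) : ℝ) * ⟪α, α⟫ ≤ (n * m : ℤ) * ⟪α, α⟫ := by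
      have : (n * m : ℝ) * ⟪α, α⟫ - m * m * ⟪α, α⟫ = m * m * (⟪β, β⟫ - ⟪α, α⟫) := by
        linear_combination (m : ℝ) * hnm
      push_cast
      nlinarith [mul_nonneg (mul_self_nonneg (m : ℝ)) (sub_nonneg.2 hle)]
    exact_mod_cast le_of_mul_le_mul_right this hαα
  have hm1 : (m : ℝ) * m = 1 := by
    have hm0 : m ≠ 0 := by rintro rfl; simp at hpos
    have : -1 ≤ m := by nlinarith
    have : m ≤ 1 := by nlinarith
    obtain rfl | rfl : m = 1 ∨ m = -1 := by omega
    all_goals norm_num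
  have hββ' : ⟪β, β⟫ = (n * m : ℤ) * ⟪α, α⟫ := by
    push_cast
    linear_combination (-(m : ℝ)) * hnm - ⟪β, β⟫ * hm1
  rw [hββ']
  interval_cases n * m <;> norm_num

theorem exists_inner_self_eq_inner_ne_zero (hα : α ∈ R.Φ) (hβ : β ∈ R.Φ) :
    ∃ δ ∈ R.Φ, ⟪δ, δ⟫ = ⟪α, α⟫ ∧ ⟪δ, β⟫ ≠ 0 := by
  set O := R.Φ.filter fun δ => ⟪δ, δ⟫ = ⟪α, α⟫
  set S := R.Φ.filter fun x => ∃ δ ∈ O, ⟪δ, x⟫ ≠ 0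
  suffices β ∈ S by
    obtain ⟨-, δ, hδ, hδβ⟩ := Finset.mem_filter.1 this
    exact ⟨δ, (Finset.mem_filter.1 hδ).1, (Finset.mem_filter.1 hδ).2, hδβ⟩
  by_contra hβS
  have hαS : α ∈ S :=
    Finset.mem_filter.2 ⟨hα, α, Finset.mem_filter.2 ⟨hα, rfl⟩, (R.inner_self_pos hα).ne'⟩
  obtain ⟨a, haS, b, hb, hab⟩ := R.irreducible S (Finset.filter_subset _ _) ⟨α, hαS⟩
    ⟨β, Finset.mem_sdiff.2 ⟨hβ, hβS⟩⟩
  obtain ⟨ha, δ, hδO, hδa⟩ := Finset.mem_filter.1 haS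
  obtain ⟨hbΦ, hbS⟩ := Finset.mem_sdiff.1 hb
  have hborth : ∀ δ ∈ O, ⟪δ, b⟫ = 0 := fun δ hδ => by
    by_contra h
    exact hbS (Finset.mem_filter.2 ⟨hbΦ, δ, hδ, h⟩)
  obtain ⟨hδ, hδδ⟩ := Finset.mem_filter.1 hδO
  -- `s_a δ` has the same length as `δ`, but is not orthogonal to `b`.
  have hδ' : sref a δ ∈ O :=
    Finset.mem_filter.2 ⟨R.reflect_mem a ha δ hδ, by rw [LinearIsometryEquiv.inner_map_map, hδδ]⟩
  refine absurd (hborth _ hδ') ?_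
  rw [sref_apply, inner_sub_left, real_inner_smul_left, hborth δ hδO, zero_sub, neg_eq_zero]
  exact mul_ne_zero (div_ne_zero (mul_ne_zero two_ne_zero hδa) (R.inner_self_pos ha).ne') hab

theorem inner_self_eq_one_or_two_or_three (hα : α ∈ R.Φ) :
    ⟪α, α⟫ = 1 ∨ ⟪α, α⟫ = 2 ∨ ⟪α, α⟫ = 3 := by
  obtain ⟨α₁, hα₁, h₁⟩ := R.exists_norm_one
  obtain ⟨δ, hδ, hδδ, hδα⟩ := R.exists_inner_self_eq_inner_ne_zero hα₁ hα
  rw [h₁] at hδδ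
  have := R.inner_self_eq_of_inner_ne_zero hδ hα hδα (hδδ ▸ R.norm_one_le α hα)
  rwa [hδδ, mul_one, mul_one] at this

theorem r_eq_one_or_two_or_three : R.r = 1 ∨ R.r = 2 ∨ R.r = 3 := by
  obtain ⟨α, hα, h⟩ := R.exists_inner_self_eq_r
  exact h ▸ R.inner_self_eq_one_or_two_or_three hα

end NRootSystem

namespace Base

variable {R : NRootSystem V} (B : Base R) {γ α β : V}

theorem coeff_eq_of_eq_sum (hγ : γ ∈ R.Φ) {d : V → ℤ} (hd : γ = ∑ α ∈ B.Δ, (d α : ℝ) • α)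
    (hα : α ∈ B.Δ) : B.coeff γ α = d α := by
  have hsum : ∑ a : B.Δ, (B.coeff γ a : ℝ) • (a : V) = ∑ a : B.Δ, (d a : ℝ) • (a : V) := by
    rw [Finset.sum_coe_sort B.Δ fun a => (B.coeff γ a : ℝ) • a,
      Finset.sum_coe_sort B.Δ fun a => (d a : ℝ) • a, ← B.coeff_spec γ hγ, ← hd]
  exact_mod_cast linearIndependent_iff'ₛ.1 B.indep Finset.univ _ _ hsum ⟨α, hα⟩
    (Finset.mem_univ _)

theorem coeff_of_mem (hβ : β ∈ B.Δ) (hα : α ∈ B.Δ) :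
    B.coeff β α = if α = β then 1 else 0 := by
  refine B.coeff_eq_of_eq_sum (B.subset hβ) (d := fun α => if α = β then 1 else 0) ?_ hα
  simp [apply_ite, ite_smul, hβ]

theorem coeff_neg (hγ : γ ∈ R.Φ) (hα : α ∈ B.Δ) : B.coeff (-γ) α = -B.coeff γ α := by
  refine B.coeff_eq_of_eq_sum (R.neg_mem hγ) (d := fun α => -B.coeff γ α) ?_ hα
  simp only [Int.cast_neg, neg_smul, Finset.sum_neg_distrib, ← B.coeff_spec γ hγ]

theorem coeff_sref (hγ : γ ∈ R.Φ) (hβ : β ∈ B.Δ) {n : ℤ} (hn : 2 * ⟪γ, β⟫ = n * ⟪β, β⟫)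
    (hα : α ∈ B.Δ) : B.coeff (sref β γ) α = B.coeff γ α - if α = β then n else 0 := by
  refine B.coeff_eq_of_eq_sum (R.reflect_mem β (B.subset hβ) γ hγ)
    (d := fun α => B.coeff γ α - if α = β then n else 0) ?_ hα
  rw [R.sref_eq_sub_zsmul (B.subset hβ) hn]
  simp only [Int.cast_sub, sub_smul, Finset.sum_sub_distrib, ← B.coeff_spec γ hγ]
  simp [hβ]

theorem ht_sref (hγ : γ ∈ R.Φ) (hβ : β ∈ B.Δ) {n : ℤ} (hn : 2 * ⟪γ, β⟫ = n * ⟪β, β⟫) :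
    B.ht (sref β γ) = B.ht γ - n := by
  simp only [ht, Finset.sum_congr rfl fun α hα => B.coeff_sref hγ hβ hn hα,
    Finset.sum_sub_distrib, Finset.sum_ite_eq', if_pos hβ]

theorem exists_inner_pos (hγ : B.IsPos γ) : ∃ β ∈ B.Δ, 0 < ⟪γ, β⟫ := by
  by_contra! h
  have : ⟪γ, γ⟫ ≤ 0 := by
    nth_rw 1 [B.coeff_spec γ hγ.1]
    rw [sum_inner]
    refine Finset.sum_nonpos fun β hβ => ?_
    rw [real_inner_smul_left, real_inner_comm]
    exact mul_nonpos_of_nonneg_of_nonpos (by exact_mod_cast hγ.2 β hβ) (h β hβ)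
  linarith [R.inner_self_pos hγ.1]

theorem exists_ne_coeff_pos (hγ : B.IsPos γ) (hγΔ : γ ∉ B.Δ) (hβ : β ∈ B.Δ) :
    ∃ β₀ ∈ B.Δ, β₀ ≠ β ∧ 0 < B.coeff γ β₀ := by
  by_contra! h
  have hγβ : γ = (B.coeff γ β : ℝ) • β := by
    nth_rw 1 [B.coeff_spec γ hγ.1]
    refine Finset.sum_eq_single_of_mem β hβ fun β₀ hβ₀ hne => ?_
    rw [le_antisymm (h β₀ hβ₀ hne) (hγ.2 β₀ hβ₀), Int.cast_zero, zero_smul]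
  rcases R.reduced β (B.subset hβ) _ (hγβ ▸ hγ.1) with h₁ | h₁
  · exact hγΔ (by rwa [hγβ, h₁, one_smul])
  · have : B.coeff γ β = -1 := by exact_mod_cast h₁
    linarith [hγ.2 β hβ]

theorem isPos_sref (hγ : B.IsPos γ) (hγΔ : γ ∉ B.Δ) (hβ : β ∈ B.Δ) : B.IsPos (sref β γ) := by
  have hγ' := R.reflect_mem β (B.subset hβ) γ hγ.1
  obtain ⟨β₀, hβ₀, hne, hpos⟩ := B.exists_ne_coeff_pos hγ hγΔ hβ
  obtain ⟨n, hn⟩ := R.pairing_int β (B.subset hβ) γ hγ.1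
  have hβ₀' : 0 < B.coeff (sref β γ) β₀ := by
    rwa [B.coeff_sref hγ.1 hβ hn hβ₀, if_neg hne, sub_zero]
  refine ⟨hγ', (B.coeff_sign _ hγ').resolve_right fun hneg => ?_⟩
  linarith [hneg β₀ hβ₀]

/-- The coroot `γ∨ = 2γ/(γ|γ)` is an integral combination of the simple coroots
`α∨ = 2α/(α|α)`. -/
theorem exists_coeff_mul_inner_self_eq_of_isPos (hγ : B.IsPos γ) (hα : α ∈ B.Δ) :
    ∃ k : ℤ, (B.coeff γ α : ℝ) * ⟪α, α⟫ = k * ⟪γ, γ⟫ := by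
  obtain ⟨N, hN⟩ : ∃ N : ℕ, B.ht γ < N := ⟨(B.ht γ).toNat + 1, by omega⟩
  induction N generalizing γ with
  | zero => exact absurd (Finset.sum_nonneg hγ.2) (by simpa [ht] using hN)
  | succ N ih =>
    by_cases hγΔ : γ ∈ B.Δ
    · refine ⟨if α = γ then 1 else 0, ?_⟩
      rw [B.coeff_of_mem hγΔ hα]
      split_ifs with h <;> simp [h]
    obtain ⟨β, hβ, hγβ⟩ := B.exists_inner_pos hγ
    obtain ⟨n, hn⟩ := R.pairing_int β (B.subset hβ) γ hγ.1
    have hn0 : 0 < n := by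
      have : (0 : ℝ) < n * ⟪β, β⟫ := by linarith
      exact_mod_cast pos_of_mul_pos_left this (R.inner_self_pos (B.subset hβ)).le
    have hht := B.ht_sref hγ.1 hβ hn
    obtain ⟨k, hk⟩ := ih (B.isPos_sref hγ hγΔ hβ) (by push_cast at hN ⊢; omega)
    rw [LinearIsometryEquiv.inner_map_map, B.coeff_sref hγ.1 hβ hn hα] at hk
    split_ifs at hk with hαβ
    · subst hαβ
      obtain ⟨m, hm⟩ := R.pairing_int γ hγ.1 α (B.subset hα)
      rw [real_inner_comm] at hm
      refine ⟨k + m, ?_⟩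
      push_cast at hk ⊢
      linear_combination hk - hn + hm
    · exact ⟨k, by simpa using hk⟩

theorem exists_coeff_mul_inner_self_eq (hγ : γ ∈ R.Φ) (hα : α ∈ B.Δ) :
    ∃ k : ℤ, (B.coeff γ α : ℝ) * ⟪α, α⟫ = k * ⟪γ, γ⟫ := by
  rcases B.coeff_sign γ hγ with hpos | hneg
  · exact B.exists_coeff_mul_inner_self_eq_of_isPos ⟨hγ, hpos⟩ hα
  have hγ' : B.IsPos (-γ) :=
    ⟨R.neg_mem hγ, fun β hβ => by rw [B.coeff_neg hγ hβ]; linarith [hneg β hβ]⟩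
  obtain ⟨k, hk⟩ := B.exists_coeff_mul_inner_self_eq_of_isPos hγ' hα
  refine ⟨-k, ?_⟩
  rw [B.coeff_neg hγ hα, inner_neg_neg] at hk
  push_cast at hk ⊢
  linarith

theorem exists_coeff_eq_r_mul_of_isLong (hγ : R.IsLong γ) (hα : α ∈ B.Δ) (hαs : R.IsShort α) :
    ∃ k : ℤ, (B.coeff γ α : ℝ) = R.r * k := by
  obtain ⟨k, hk⟩ := B.exists_coeff_mul_inner_self_eq hγ.1 hα
  have hlt := hαs.2
  rw [hγ.2] at hk
  -- `(α|α) < r` both lie in `{1, 2, 3}`, hence are coprime.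
  rcases R.inner_self_eq_one_or_two_or_three hαs.1 with h | h | h <;>
    rcases R.r_eq_one_or_two_or_three with hr | hr | hr <;>
    rw [h, hr] at hk hlt <;> norm_num at hlt
  · exact ⟨k, by rw [hr]; linarith⟩
  · exact ⟨k, by rw [hr]; linarith⟩
  · exact ⟨B.coeff γ α - k, by rw [hr]; push_cast; linarith⟩

theorem coeff_mul_inner_self_mem_zmultiples (hα : α ∈ B.Δ)
    (hγα : R.IsShort α → ∃ k : ℤ, (B.coeff γ α : ℝ) = R.r * k) :
    (B.coeff γ α : ℝ) * ⟪α, α⟫ ∈ AddSubgroup.zmultiples R.r := by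
  have hαΦ := B.subset hα
  rcases (R.inner_self_le_r hαΦ).lt_or_eq with hlt | heq
  · obtain ⟨k, hk⟩ := hγα ⟨hαΦ, hlt⟩
    obtain ⟨j, hj⟩ : ∃ j : ℤ, ⟪α, α⟫ = j := by
      rcases R.inner_self_eq_one_or_two_or_three hαΦ with h | h | h
      exacts [⟨1, by rw [h]; norm_num⟩, ⟨2, by rw [h]; norm_num⟩, ⟨3, by rw [h]; norm_num⟩]
    exact AddSubgroup.mem_zmultiples_iff.2 ⟨k * j, by rw [hk, hj, zsmul_eq_mul]; push_cast; ring⟩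
  · exact AddSubgroup.mem_zmultiples_iff.2 ⟨B.coeff γ α, by rw [heq, zsmul_eq_mul]⟩

theorem inner_self_mem_zmultiples_r (hγ : γ ∈ R.Φ)
    (H : ∀ α ∈ B.Δ, R.IsShort α → ∃ k : ℤ, (B.coeff γ α : ℝ) = R.r * k) :
    ⟪γ, γ⟫ ∈ AddSubgroup.zmultiples R.r := by
  set M := AddSubgroup.zmultiples R.r
  set S : Set V := {v | ∃ a ∈ R.Φ, ∃ t : ℤ, v = (t : ℝ) • a ∧ (t : ℝ) * ⟪a, a⟫ ∈ M}
  have hS₁ : ∀ v ∈ S, ⟪v, v⟫ ∈ M := by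
    rintro _ ⟨a, -, t, rfl, ht⟩
    rw [real_inner_smul_left, real_inner_smul_right, ← zsmul_eq_mul]
    exact M.zsmul_mem ht t
  have hS₂ : ∀ v ∈ S, ∀ w ∈ S, 2 * ⟪v, w⟫ ∈ M := by
    rintro _ ⟨a, ha, t, rfl, ht⟩ _ ⟨b, hb, s, rfl, -⟩
    obtain ⟨n, hn⟩ := R.pairing_int a ha b hb
    have : 2 * ⟪(t : ℝ) • a, (s : ℝ) • b⟫ = ((s * n : ℤ) : ℝ) * (t * ⟪a, a⟫) := by
      rw [real_inner_smul_left, real_inner_smul_right, real_inner_comm]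
      push_cast
      linear_combination (t * s : ℝ) * hn
    rw [this, ← zsmul_eq_mul]
    exact M.zsmul_mem ht _
  have hγS : γ ∈ AddSubgroup.closure S := by
    rw [B.coeff_spec γ hγ]
    exact AddSubgroup.sum_mem _ fun α hα => AddSubgroup.subset_closure
      ⟨α, B.subset hα, _, rfl, B.coeff_mul_inner_self_mem_zmultiples hα (H α hα)⟩
  exact inner_self_mem_of_mem_closure hS₁ hS₂ hγS

end Base

/-- a root `γ = Σ_{α ∈ Δ} n_α α` is long if and only if `r` divides the
coefficient `n_α` for every short simple root `α ∈ Δ_sh`. -/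
theorem isLong_iff_r_dvd_short_coeff (R : NRootSystem V) (B : Base R) {γ : V}
    (hγ : γ ∈ R.Φ) :
    R.IsLong γ ↔ ∀ α ∈ B.Δ, R.IsShort α → ∃ k : ℤ, (B.coeff γ α : ℝ) = R.r * k := by
  refine ⟨fun hγl α hα hαs => B.exists_coeff_eq_r_mul_of_isLong hγl hα hαs,
    fun H => ⟨hγ, ?_⟩⟩
  obtain ⟨k, hk⟩ := AddSubgroup.mem_zmultiples_iff.1 (B.inner_self_mem_zmultiples_r hγ H)
  rw [zsmul_eq_mul] at hk
  have hpos := R.inner_self_pos hγ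
  have hle := R.inner_self_le_r hγ
  have hr : 0 < R.r := hpos.trans_le hle
  have hk1 : (1 : ℝ) ≤ k := by
    exact_mod_cast (show (0 : ℤ) < k by exact_mod_cast pos_of_mul_pos_left (hk ▸ hpos) hr.le)
  exact le_antisymm hle (hk ▸ le_mul_of_one_le_left hr.le hk1)
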